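/- Let κ be a perfect field of prime characteristic p, let S = κ[x, y, z, r, s], and let I = (ry, rz, z(yx − s²)). Then the ring S/I is not F-split: there is no additive map φ : S/I → S/I satisfying φ(a^p·b) = a·φ(b) for all a, b ∈ S/I and φ(1) = 1. -/

import Mathlib

/-!
For `t = x y s^(p-2)` one has `r^p t = 0` and `z^p t = (z s)^p` in `S/I`, so a splitting `φ` would
give `c = φ t` with `r c = 0` and `z c = z s`. No such `c` exists: over the dual numbers
`D = κ[ε]`, the points `(x, y, z, r, s) = (1, 0, 0, T, ε)` and `(1, 0, T, 0, ε)` of `V(I)` with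
values in `D[T]` send `c` to `0` and to `ε` respectively (as `T` is a nonzerodivisor), while
they agree at `T = 0`. The variables `x, y, z, r, s` are `X 0, …, X 4`.
-/

open MvPolynomial

/-- The trace map on a polynomial ring: on a monomial `m`, it returns
`(m·x_1⋯x_n)^{1/p}/(x_1⋯x_n)` if `m·x_1⋯x_n` is a `p`-th power of a monomial,
and `0` otherwise, extended `κ`-linearly. -/
noncomputable def Tr (κ : Type*) [CommSemiring κ] {σ : Type*} [Fintype σ] [DecidableEq σ]
    (p : ℕ) (f : MvPolynomial σ κ) : MvPolynomial σ κ :=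
  ∑ b ∈ f.support,
    if ∀ i : σ, (b i + 1) % p = 0 then
      MvPolynomial.monomial (Finsupp.equivFunOnFinite.symm fun i => (b i + 1) / p - 1) (f.coeff b)
    else 0

/-- A Frobenius splitting: an additive map `φ` with `φ(a^p·b) = a·φ(b)` and `φ(1) = 1`. -/
def IsFrobSplitting {R : Type*} [CommSemiring R] (p : ℕ) (φ : R → R) : Prop :=
  (∀ a b : R, φ (a + b) = φ a + φ b) ∧ (∀ a b : R, φ (a ^ p * b) = a * φ b) ∧ φ 1 = 1

/-- `φ` compatibly splits the ideal `I` if `φ(I) ⊆ I`. -/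
def CompatiblySplits {R : Type*} [CommSemiring R] (φ : R → R) (I : Ideal R) : Prop :=
  ∀ a ∈ I, φ a ∈ I

/-- `f` has no term divisible by the variable `y`. -/
def NoVar {κ : Type*} [CommSemiring κ] {σ : Type*} (y : σ) (f : MvPolynomial σ κ) : Prop :=
  ∀ b ∈ f.support, (b : σ →₀ ℕ) y = 0

/-- `in_y(f)`: the sum of the terms of `f` of highest degree in the variable `y`. -/
noncomputable def inY {κ : Type*} [CommSemiring κ] {σ : Type*} [DecidableEq σ]
    (y : σ) (f : MvPolynomial σ κ) : MvPolynomial σ κ :=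
  ∑ b ∈ f.support,
    if (b : σ →₀ ℕ) y = f.degreeOf y then MvPolynomial.monomial b (f.coeff b) else 0

/-- `in_y(I)`, the ideal generated by `in_y(f)` for `f ∈ I`. -/
noncomputable def inYIdeal {κ : Type*} [CommSemiring κ] {σ : Type*} [DecidableEq σ]
    (y : σ) (I : Ideal (MvPolynomial σ κ)) : Ideal (MvPolynomial σ κ) :=
  Ideal.span { g | ∃ f ∈ I, g = inY y f }

/-- The saturation `J : x^∞`. -/
def satPow {R : Type*} [CommRing R] (J : Ideal R) (x : R) : Ideal R where
  carrier := { f | ∃ k : ℕ, x ^ k * f ∈ J }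
  zero_mem' := ⟨0, by simp⟩
  add_mem' := by
    rintro a b ⟨k, hk⟩ ⟨l, hl⟩
    refine ⟨k + l, ?_⟩
    have h := J.add_mem (J.mul_mem_left (x ^ l) hk) (J.mul_mem_left (x ^ k) hl)
    have e : x ^ (k + l) * (a + b) = x ^ l * (x ^ k * a) + x ^ k * (x ^ l * b) := by ring
    rwa [e]
  smul_mem' := by
    rintro c a ⟨k, hk⟩
    refine ⟨k, ?_⟩
    have h := J.mul_mem_left c hk
    have e : x ^ k * (c • a) = c * (x ^ k * a) := by
      simp [smul_eq_mul]; ring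
    rwa [e]

/-- `C(y,I) = in_y(I) : y^∞`. -/
noncomputable def Cyd {κ : Type*} [Field κ] {σ : Type*} [DecidableEq σ]
    (y : σ) (I : Ideal (MvPolynomial σ κ)) : Ideal (MvPolynomial σ κ) :=
  satPow (inYIdeal y I) (X y)

/-- `N(y,I)`, the ideal generated by the elements of `I` having no term divisible by `y`. -/
noncomputable def Nyd {κ : Type*} [Field κ] {σ : Type*} (y : σ) (I : Ideal (MvPolynomial σ κ)) :
    Ideal (MvPolynomial σ κ) :=
  Ideal.span { f | f ∈ I ∧ NoVar y f }

/-- `I` admits a geometric vertex decomposition at `y`. -/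
def IsGVD {κ : Type*} [Field κ] {σ : Type*} [DecidableEq σ]
    (y : σ) (I : Ideal (MvPolynomial σ κ)) : Prop :=
  inYIdeal y I = Cyd y I ⊓ (Nyd y I + Ideal.span {X y}) ∧
    ((Cyd y I).radical = (Nyd y I).radical ∨
      ∀ P ∈ (Cyd y I).minimalPrimes, P ∉ (Nyd y I).minimalPrimes)

/-- A nondegenerate geometric vertex decomposition. -/
def IsNondegGVD {κ : Type*} [Field κ] {σ : Type*} [DecidableEq σ]
    (y : σ) (I : Ideal (MvPolynomial σ κ)) : Prop :=
  IsGVD y I ∧ Cyd y I ≠ ⊤ ∧ (Cyd y I).radical ≠ (Nyd y I).radical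

/-- A degenerate geometric vertex decomposition. -/
def IsDegenGVD {κ : Type*} [Field κ] {σ : Type*} [DecidableEq σ]
    (y : σ) (I : Ideal (MvPolynomial σ κ)) : Prop :=
  IsGVD y I ∧ (Cyd y I = ⊤ ∨ (Cyd y I).radical = (Nyd y I).radical)

/-- The ideal `N` has no embedded primes: every associated prime is minimal. -/
def NoEmbeddedPrimes {R : Type*} [CommRing R] (N : Ideal R) : Prop :=
  associatedPrimes R (R ⧸ N) ⊆ N.minimalPrimes

/-- `q` is a nonzerodivisor modulo `N`. -/
def NZDMod {R : Type*} [CommRing R] (N : Ideal R) (q : R) : Prop :=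
  ∀ a : R, q * a ∈ N → a ∈ N

theorem mul_apply_eq_of_pow_mul_eq {R : Type*} [CommSemiring R] {p : ℕ} {φ : R → R}
    (hφ : ∀ a b : R, φ (a ^ p * b) = a * φ b) (h1 : φ 1 = 1) {a b t : R}
    (h : a ^ p * t = b ^ p) : a * φ t = b := by
  rw [← hφ, h, ← mul_one (b ^ p), hφ, h1, mul_one]

section FedderSingh

variable (κ : Type*) [CommRing κ]

noncomputable abbrev fedderSinghIdeal : Ideal (MvPolynomial (Fin 5) κ) :=
  Ideal.span {X 3 * X 1, X 3 * X 2, X 2 * (X 1 * X 0 - X 4 ^ 2)}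

local notation "π" => Ideal.Quotient.mk (fedderSinghIdeal κ)

variable {κ}

noncomputable def fedderSinghEval {A : Type*} [CommRing A] [Algebra κ A] (v : Fin 5 → A)
    (hv : v 3 * v 1 = 0 ∧ v 3 * v 2 = 0 ∧ v 2 * (v 1 * v 0 - v 4 ^ 2) = 0) :
    MvPolynomial (Fin 5) κ ⧸ fedderSinghIdeal κ →ₐ[κ] A :=
  Ideal.Quotient.liftₐ _ (aeval v) fun a ha => by
    refine (Ideal.span_le (I := RingHom.ker (aeval (R := κ) v))).mpr ?_ ha
    rintro _ (rfl | rfl | rfl) <;> simp [hv.1, hv.2.1, hv.2.2]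

@[simp]
theorem fedderSinghEval_mk {A : Type*} [CommRing A] [Algebra κ A] (v : Fin 5 → A) (hv)
    (a : MvPolynomial (Fin 5) κ) : fedderSinghEval v hv (π a) = aeval v a :=
  rfl

theorem mk_X3_pow_mul_eq_zero (q : ℕ) :
    π (X 3) ^ (q + 2) * π (X 0 * X 1 * X 4 ^ q) = 0 := by
  have hry : π (X 3 * X 1) = 0 := Ideal.Quotient.eq_zero_iff_mem.mpr (Ideal.subset_span (by simp))
  simp only [map_mul, map_pow] at hry ⊢
  linear_combination (π (X 3) ^ (q + 1) * π (X 0) * π (X 4) ^ q) * hry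

theorem mk_X2_pow_mul_eq (q : ℕ) :
    π (X 2) ^ (q + 2) * π (X 0 * X 1 * X 4 ^ q) = π (X 2 * X 4) ^ (q + 2) := by
  have hz : π (X 2 * (X 1 * X 0 - X 4 ^ 2)) = 0 :=
    Ideal.Quotient.eq_zero_iff_mem.mpr (Ideal.subset_span (by simp))
  simp only [map_mul, map_pow, map_sub] at hz ⊢
  linear_combination (π (X 2) ^ (q + 1) * π (X 4) ^ q) * hz

open scoped DualNumber in
theorem mul_mk_X3_ne_zero_of_mul_mk_X2_eq [Nontrivial κ]
    {c : MvPolynomial (Fin 5) κ ⧸ fedderSinghIdeal κ} (hz : π (X 2) * c = π (X 2 * X 4)) :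
    π (X 3) * c ≠ 0 := by
  intro hr
  let fr := fedderSinghEval (κ := κ)
    (![1, 0, 0, Polynomial.X, Polynomial.C ε] : Fin 5 → Polynomial κ[ε]) (by simp)
  let fz := fedderSinghEval (κ := κ)
    (![1, 0, Polynomial.X, 0, Polynomial.C ε] : Fin 5 → Polynomial κ[ε])
    (by simp [← Polynomial.C_pow, DualNumber.eps_pow_two])
  have hfr : fr c = 0 := Polynomial.isRegular_X.left (by simpa [fr] using congrArg fr hr)
  have hfz : fz c = Polynomial.C ε :=
    Polynomial.isRegular_X.left (by simpa [fz] using congrArg fz hz)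
  have hcomp : (Polynomial.evalRingHom (0 : κ[ε])).comp fr.toRingHom =
      (Polynomial.evalRingHom 0).comp fz.toRingHom := by
    refine Ideal.Quotient.ringHom_ext (MvPolynomial.ringHom_ext (fun a => ?_) fun i => ?_)
    · simp [fr, fz]
    · fin_cases i <;> simp [fr, fz]
  have h0 := DFunLike.congr_fun hcomp c
  simp only [RingHom.comp_apply, AlgHom.toRingHom_eq_coe, RingHom.coe_coe, hfr, hfz,
    Polynomial.coe_evalRingHom, Polynomial.eval_zero, Polynomial.eval_C] at h0
  exact one_ne_zero (congrArg TrivSqZeroExt.snd h0).symm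

end FedderSingh

theorem fedder_singh_not_Fsplit_general {p : ℕ} [Fact p.Prime] {κ : Type*} [Field κ] :
    ¬ ∃ φ : (MvPolynomial (Fin 5) κ ⧸
          (Ideal.span {X 3 * X 1, X 3 * X 2, X 2 * (X 1 * X 0 - X 4 ^ 2)} :
            Ideal (MvPolynomial (Fin 5) κ))) →
        (MvPolynomial (Fin 5) κ ⧸
          (Ideal.span {X 3 * X 1, X 3 * X 2, X 2 * (X 1 * X 0 - X 4 ^ 2)} :
            Ideal (MvPolynomial (Fin 5) κ))),
      (∀ a b, φ (a + b) = φ a + φ b) ∧ (∀ a b, φ (a ^ p * b) = a * φ b) ∧ φ 1 = 1 := by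
  rintro ⟨φ, -, hφ, h1⟩
  obtain ⟨q, rfl⟩ := Nat.exists_eq_add_of_le' (Fact.out : p.Prime).two_le
  set t := Ideal.Quotient.mk (fedderSinghIdeal κ) (X 0 * X 1 * X 4 ^ q)
  have hz : Ideal.Quotient.mk _ (X 2) * φ t = Ideal.Quotient.mk _ (X 2 * X 4) :=
    mul_apply_eq_of_pow_mul_eq hφ h1 (mk_X2_pow_mul_eq q)
  have hr : Ideal.Quotient.mk _ (X 3) * φ t = 0 :=
    mul_apply_eq_of_pow_mul_eq hφ h1 (by rw [mk_X3_pow_mul_eq_zero, zero_pow (by omega)])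
  exact mul_mk_X3_ne_zero_of_mul_mk_X2_eq hz hr

/-- With `S = κ[x,y,z,r,s]` (variables `X 0, X 1, X 2, X 3, X 4` respectively) and
`I = (ry, rz, z(yx − s²))`, the ring `S/I` is not F-split. -/
theorem fedder_singh_not_Fsplit {p : ℕ} [Fact p.Prime] {κ : Type*} [Field κ] [CharP κ p]
    [PerfectRing κ p] :
    ¬ ∃ φ : (MvPolynomial (Fin 5) κ ⧸
          (Ideal.span {X 3 * X 1, X 3 * X 2, X 2 * (X 1 * X 0 - X 4 ^ 2)} :
            Ideal (MvPolynomial (Fin 5) κ))) →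
        (MvPolynomial (Fin 5) κ ⧸
          (Ideal.span {X 3 * X 1, X 3 * X 2, X 2 * (X 1 * X 0 - X 4 ^ 2)} :
            Ideal (MvPolynomial (Fin 5) κ))),
      (∀ a b, φ (a + b) = φ a + φ b) ∧ (∀ a b, φ (a ^ p * b) = a * φ b) ∧ φ 1 = 1 :=
  fedder_singh_not_Fsplit_general
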